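/- Let A be a reduced DFA avoiding pattern P_g (no distinct p ≠ q and nonempty words x, y with p·x = p, q·x = q, p·y = q). Then every nontrivial component of A is a sink, and for every nonempty word u and every sink C, the restriction of the action of u to C is non-permutational. -/

import Mathlib

/-- State `q` is reachable from `p` in the DFA `M`. -/
def Reach {α σ : Type*} (M : DFA α σ) (p q : σ) : Prop :=
  ∃ x : List α, M.evalFrom p x = q

/-- A DFA is reduced if it is connected and all pairs of distinct states are
distinguishable by some word. -/
def Reduced {α σ : Type*} (M : DFA α σ) : Prop :=
  (∀ q : σ, ∃ x : List α, M.evalFrom M.start x = q) ∧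
  (∀ p q : σ, p ≠ q → ∃ w : List α,
    ¬ (M.evalFrom p w ∈ M.accept ↔ M.evalFrom q w ∈ M.accept))

/-- `C` is a strongly connected component (class of mutual reachability) of `M`. -/
def IsComponent {α σ : Type*} (M : DFA α σ) (C : Set σ) : Prop :=
  ∃ p : σ, C = {q | Reach M p q ∧ Reach M q p}

/-- A component is a sink if it is closed under all letters. -/
def IsSink {α σ : Type*} (M : DFA α σ) (C : Set σ) : Prop :=
  IsComponent M C ∧ ∀ q ∈ C, ∀ a : α, M.step q a ∈ C

/-- A component is trivial if it is a singleton `{p}` with `p·a ≠ p` for every letter `a`. -/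
def IsTrivialComponent {α σ : Type*} (M : DFA α σ) (C : Set σ) : Prop :=
  IsComponent M C ∧ ∃ p : σ, C = {p} ∧ ∀ a : α, M.step p a ≠ p

/-- `f` is non-permutational on `C`: no subset `D ⊆ C` with `|D| > 1` is mapped
bijectively onto itself by `f`. -/
def NonPermutationalOn {σ : Type*} (f : σ → σ) (C : Set σ) : Prop :=
  ¬ ∃ D : Set σ, D ⊆ C ∧ 1 < D.ncard ∧ Set.BijOn f D D

/-- The automaton avoids pattern `P_d`. -/
def AvoidsPd {α σ : Type*} (M : DFA α σ) : Prop :=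
  ¬ ∃ (p q : σ) (x : List α), p ≠ q ∧ x ≠ [] ∧
    M.evalFrom p x = p ∧ M.evalFrom q x = q

/-- The automaton avoids pattern `P_g`. -/
def AvoidsPg {α σ : Type*} (M : DFA α σ) : Prop :=
  ¬ ∃ (p q : σ) (x y : List α), p ≠ q ∧ x ≠ [] ∧ y ≠ [] ∧
    M.evalFrom p x = p ∧ M.evalFrom q x = q ∧ M.evalFrom p y = q

/-!
If a state `p` loops on a nonempty word `x` and `q` is any state reached from `p`,
then some `q·xⁱ` lies on an `x`-cycle; a common power `xᴺ` then fixes both `p` and `q·xⁱ`,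
and `P_g`-avoidance forces `q·xⁱ = p`, so `q` reaches back to `p`. Every state of a nontrivial
component lies on a nonempty cycle, so such a component cannot be left. Similarly, a subset of a
component permuted by `u` consists of `u`-periodic states which are mutually reachable and all
fixed by a common power of `u`, so it has at most one element.
-/

open Function Set

theorem Set.MapsTo.mem_periodicPts_of_injOn {α : Type*} {f : α → α} {s : Set α} (hs : s.Finite)
    (hmaps : MapsTo f s s) (hinj : InjOn f s) {x : α} (hx : x ∈ s) : x ∈ periodicPts f := by
  have : Finite s := hs.to_subtype
  obtain ⟨n, hn, hper⟩ :=
    Injective.mem_periodicPts (hmaps.restrict_inj.mpr hinj) ⟨x, hx⟩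
  exact mk_mem_periodicPts hn (hper.map (fun _ => rfl : Semiconj Subtype.val _ f))

theorem Function.exists_iterate_mem_periodicPts {α : Type*} [Finite α] (f : α → α) (x : α) :
    ∃ i, f^[i] x ∈ periodicPts f := by
  obtain ⟨i, j, hne, heq⟩ := Finite.exists_ne_map_eq_of_infinite (fun i : ℕ => f^[i] x)
  wlog hij : i < j generalizing i j
  · exact this j i hne.symm heq.symm (by omega)
  refine ⟨i, mk_mem_periodicPts (n := j - i) (by omega) ?_⟩
  rw [IsPeriodicPt, IsFixedPt, ← iterate_add_apply, Nat.sub_add_cancel hij.le]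
  exact heq.symm

theorem DFA.evalFrom_flatten_replicate {α σ : Type*} (M : DFA α σ) (x : List α) (n : ℕ)
    (s : σ) : M.evalFrom s (List.replicate n x).flatten = (M.evalFrom · x)^[n] s := by
  induction n generalizing s with
  | zero => rfl
  | succ n ih =>
    rw [List.replicate_succ, List.flatten_cons, DFA.evalFrom_of_append, ih,
      iterate_succ_apply]

section

variable {α σ : Type*} {M : DFA α σ}

theorem Reach.refl (p : σ) : Reach M p p := ⟨[], rfl⟩

theorem Reach.trans {p q r : σ} (hpq : Reach M p q) (hqr : Reach M q r) : Reach M p r := by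
  obtain ⟨x, rfl⟩ := hpq
  obtain ⟨y, rfl⟩ := hqr
  exact ⟨x ++ y, M.evalFrom_of_append p x y⟩

theorem IsComponent.reach_of_mem {C : Set σ} (hC : IsComponent M C) {p q : σ} (hp : p ∈ C)
    (hq : q ∈ C) : Reach M p q := by
  obtain ⟨c, rfl⟩ := hC
  exact hp.2.trans hq.1

theorem IsComponent.mem_of_reach {C : Set σ} (hC : IsComponent M C) {p q : σ} (hp : p ∈ C)
    (hpq : Reach M p q) (hqp : Reach M q p) : q ∈ C := by
  obtain ⟨c, rfl⟩ := hC
  exact ⟨hp.1.trans hpq, hqp.trans hp.2⟩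

theorem IsComponent.exists_loop {C : Set σ} (hC : IsComponent M C)
    (hnontriv : ¬ IsTrivialComponent M C) {q : σ} (hq : q ∈ C) :
    ∃ x : List α, x ≠ [] ∧ M.evalFrom q x = q := by
  by_cases hCq : C = {q}
  · have : ∃ a : α, M.step q a = q := by
      by_contra! h
      exact hnontriv ⟨hC, q, hCq, h⟩
    obtain ⟨a, ha⟩ := this
    exact ⟨[a], List.cons_ne_nil _ _, ha⟩
  · obtain ⟨t, ht, htq⟩ : ∃ t ∈ C, t ≠ q := by
      by_contra! h
      exact hCq (eq_singleton_iff_unique_mem.mpr ⟨hq, h⟩)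
    obtain ⟨y, hy⟩ := hC.reach_of_mem hq ht
    obtain ⟨z, hz⟩ := hC.reach_of_mem ht hq
    refine ⟨y ++ z, ?_, by rw [M.evalFrom_of_append, hy, hz]⟩
    intro hyz
    rw [List.append_eq_nil_iff.mp hyz |>.1] at hy
    exact htq hy.symm

theorem AvoidsPg.eq_of_loop (havoid : AvoidsPg M) {x : List α} (hx : x ≠ []) {p q : σ}
    (hp : M.evalFrom p x = p) (hq : M.evalFrom q x = q) (hpq : Reach M p q) : p = q := by
  obtain ⟨y, hy⟩ := hpq
  by_contra hne
  have hy_ne : y ≠ [] := by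
    rintro rfl
    exact hne hy
  exact havoid ⟨p, q, x, y, hne, hx, hy_ne, hp, hq, hy⟩

theorem AvoidsPg.eq_of_mem_periodicPts (havoid : AvoidsPg M) {x : List α} (hx : x ≠ [])
    {p q : σ} (hp : p ∈ periodicPts (M.evalFrom · x)) (hq : q ∈ periodicPts (M.evalFrom · x))
    (hpq : Reach M p q) : p = q := by
  set f : σ → σ := (M.evalFrom · x)
  set N := minimalPeriod f p * minimalPeriod f q
  have hN : 0 < N :=
    Nat.mul_pos (minimalPeriod_pos_of_mem_periodicPts hp) (minimalPeriod_pos_of_mem_periodicPts hq)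
  have hxN : (List.replicate N x).flatten ≠ [] := by
    simpa [List.flatten_eq_nil_iff, hx] using hN.ne'
  refine havoid.eq_of_loop hxN ?_ ?_ hpq
  · rw [M.evalFrom_flatten_replicate]
    exact (isPeriodicPt_minimalPeriod f p).mul_const _
  · rw [M.evalFrom_flatten_replicate]
    exact (isPeriodicPt_minimalPeriod f q).const_mul _

theorem AvoidsPg.reach_of_loop [Finite σ] (havoid : AvoidsPg M) {x : List α} (hx : x ≠ [])
    {p q : σ} (hp : M.evalFrom p x = p) (hpq : Reach M p q) : Reach M q p := by
  obtain ⟨i, hi⟩ := exists_iterate_mem_periodicPts (M.evalFrom · x) q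
  have hqi : Reach M q ((M.evalFrom · x)^[i] q) :=
    ⟨(List.replicate i x).flatten, M.evalFrom_flatten_replicate x i q⟩
  have hp_per : p ∈ periodicPts (M.evalFrom · x) := mk_mem_periodicPts Nat.one_pos hp
  rwa [← havoid.eq_of_mem_periodicPts hx hp_per hi (hpq.trans hqi)] at hqi

theorem IsComponent.isSink_of_avoidsPg [Finite σ] (havoid : AvoidsPg M) {C : Set σ}
    (hC : IsComponent M C) (hnontriv : ¬ IsTrivialComponent M C) : IsSink M C := by
  refine ⟨hC, fun q hq a => ?_⟩
  obtain ⟨x, hx, hloop⟩ := hC.exists_loop hnontriv hq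
  have hstep : Reach M q (M.step q a) := ⟨[a], rfl⟩
  exact hC.mem_of_reach hq hstep (havoid.reach_of_loop hx hloop hstep)

theorem IsComponent.nonPermutationalOn_of_avoidsPg [Finite σ] (havoid : AvoidsPg M)
    {u : List α} (hu : u ≠ []) {C : Set σ} (hC : IsComponent M C) :
    NonPermutationalOn (M.evalFrom · u) C := by
  rintro ⟨D, hDC, hcard, hbij⟩
  obtain ⟨p, hp, q, hq, hpq⟩ := (one_lt_ncard (toFinite D)).mp hcard
  have hper {s : σ} (hs : s ∈ D) : s ∈ periodicPts (M.evalFrom · u) :=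
    hbij.mapsTo.mem_periodicPts_of_injOn (toFinite D) hbij.injOn hs
  exact hpq (havoid.eq_of_mem_periodicPts hu (hper hp) (hper hq)
    (hC.reach_of_mem (hDC hp) (hDC hq)))

end

theorem sinks_of_avoids_Pg_general {α σ : Type*} [Fintype σ] (M : DFA α σ)
    (havoid : AvoidsPg M) :
    (∀ C : Set σ, IsComponent M C → ¬ IsTrivialComponent M C → IsSink M C) ∧
    (∀ u : List α, u ≠ [] → ∀ C : Set σ, IsSink M C →
      NonPermutationalOn (fun q => M.evalFrom q u) C) :=
  ⟨fun _ hC hnontriv => hC.isSink_of_avoidsPg havoid hnontriv,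
    fun _ hu _ hC => hC.1.nonPermutationalOn_of_avoidsPg havoid hu⟩

theorem sinks_of_avoids_Pg {α σ : Type*} [Fintype σ] (M : DFA α σ)
    (hred : Reduced M) (havoid : AvoidsPg M) :
    (∀ C : Set σ, IsComponent M C → ¬ IsTrivialComponent M C → IsSink M C) ∧
    (∀ u : List α, u ≠ [] → ∀ C : Set σ, IsSink M C →
      NonPermutationalOn (fun q => M.evalFrom q u) C) :=
  sinks_of_avoids_Pg_general M havoid
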